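/- arXiv:1012.3109 — 2 statements merged into one kernel-verified Lean document; each statement's English description precedes it below -/
import Mathlib

section
/- Let κ = γ√(λ² + μ²) (branch with Re κ > 0 for Re λ > 0) and κ₁ = γ|v|λ, where γ = 1/√(1−v²), μ = m/γ, 0 < |v| < 1, m > 0. Then for all λ ∈ ℂ with Re λ > 0, one has 0 < Re κ₁ < Re κ. -/
open Complex

/-!
Squaring maps the vertical line `Re z = a` (`a > 0`) onto the parabola
`Re w = a² - (Im w)² / (4a²)`, and the part of the right half-plane beyond that line onto the
exterior of the parabola. Since `γ² (1 - s²) = 1`, we have `κ² = γ²λ² + m²`, and for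
`a = Re κ₁ = γ s Re λ` the exterior condition on `κ²` reduces to the positivity of
`4γ² (Re λ)² ((Im λ)² + s² ((Re λ)² + m²))`.
-/

theorem Real.one_div_sqrt_sq_mul_self {t : ℝ} (ht : 0 < t) : (1 / √t) ^ 2 * t = 1 := by
  rw [div_pow, Real.sq_sqrt ht.le]
  field_simp

namespace Complex

theorem ofReal_one_div_sqrt_sq_mul_sq_add_sq {t : ℝ} (ht : 0 < t) (w : ℂ) (m : ℝ) :
    ((1 / √t : ℝ) : ℂ) ^ 2 * (w ^ 2 + ((m * √t : ℝ) : ℂ) ^ 2) =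
      ((1 / √t : ℝ) : ℂ) ^ 2 * w ^ 2 + (m : ℂ) ^ 2 := by
  have h : ((1 / √t : ℝ) : ℂ) ^ 2 * ((√t : ℝ) : ℂ) ^ 2 = 1 := by
    rw [← ofReal_pow, ← ofReal_pow, ← ofReal_mul, Real.sq_sqrt ht.le,
      Real.one_div_sqrt_sq_mul_self ht, ofReal_one]
  rw [ofReal_mul]
  linear_combination (m : ℂ) ^ 2 * h

theorem re_sq_sub_sq_mul_im_sq_add_sq (z : ℂ) (a : ℝ) :
    (z.re ^ 2 - a ^ 2) * (z.im ^ 2 + a ^ 2) = (z ^ 2).im ^ 2 / 4 + a ^ 2 * (z ^ 2).re - a ^ 4 := by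
  simp only [sq, mul_re, mul_im]
  ring

theorem lt_re_of_sq_outside_parabola {z : ℂ} {a : ℝ} (hz : 0 ≤ z.re)
    (h : 4 * a ^ 2 * (a ^ 2 - (z ^ 2).re) < (z ^ 2).im ^ 2) : a < z.re := by
  have hprod : 0 < (z.re ^ 2 - a ^ 2) * (z.im ^ 2 + a ^ 2) := by
    rw [re_sq_sub_sq_mul_im_sq_add_sq]
    linarith
  have hsq : a ^ 2 < z.re ^ 2 :=
    sub_pos.mp (pos_of_mul_pos_left hprod (by positivity))
  calc a ≤ |a| := le_abs_self a
    _ < |z.re| := sq_lt_sq.mp hsq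
    _ = z.re := abs_of_nonneg hz

theorem mul_mul_re_lt_re_of_sq_eq {γ s m : ℝ} (hγ : γ ^ 2 * (1 - s ^ 2) = 1) (hs : s ≠ 0)
    {w z : ℂ} (hw : w.re ≠ 0) (hz : 0 ≤ z.re)
    (h : z ^ 2 = (γ : ℂ) ^ 2 * w ^ 2 + (m : ℂ) ^ 2) :
    γ * s * w.re < z.re := by
  have hre : (z ^ 2).re = γ ^ 2 * (w.re ^ 2 - w.im ^ 2) + m ^ 2 := by
    rw [h]
    simp only [sq, add_re, mul_re, mul_im, ofReal_re, ofReal_im]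
    ring
  have him : (z ^ 2).im = 2 * γ ^ 2 * w.re * w.im := by
    rw [h]
    simp only [sq, add_im, mul_re, mul_im, ofReal_re, ofReal_im]
    ring
  have hγ0 : γ ≠ 0 := by rintro rfl; simp at hγ
  refine lt_re_of_sq_outside_parabola hz ?_
  rw [hre, him, ← sub_pos]
  have hgap : (2 * γ ^ 2 * w.re * w.im) ^ 2 -
        4 * (γ * s * w.re) ^ 2 * ((γ * s * w.re) ^ 2 - (γ ^ 2 * (w.re ^ 2 - w.im ^ 2) + m ^ 2))
      = 4 * γ ^ 2 * w.re ^ 2 * (w.im ^ 2 + s ^ 2 * (w.re ^ 2 + m ^ 2)) := by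
    linear_combination (4 * γ ^ 2 * w.re ^ 2 * w.im ^ 2 + 4 * γ ^ 2 * s ^ 2 * w.re ^ 4) * hγ
  rw [hgap]
  positivity

end Complex

theorem green_exponent_inequality_general (s : ℝ) (hs0 : 0 < s) (hs1 : s < 1) (m : ℝ)
    (lam : ℂ) (hlam : 0 < lam.re) (kappa : ℂ)
    (hkappa : kappa ^ 2 =
      ((1 / Real.sqrt (1 - s ^ 2) : ℝ) : ℂ) ^ 2 *
        (lam ^ 2 + ((m * Real.sqrt (1 - s ^ 2) : ℝ) : ℂ) ^ 2))
    (hkre : 0 < kappa.re) :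
    let kappa₁ : ℂ := ((1 / Real.sqrt (1 - s ^ 2) : ℝ) : ℂ) * (s : ℂ) * lam
    0 < kappa₁.re ∧ kappa₁.re < kappa.re := by
  intro kappa₁
  have ht : 0 < 1 - s ^ 2 := by nlinarith
  rw [ofReal_one_div_sqrt_sq_mul_sq_add_sq ht] at hkappa
  have hκ₁ : kappa₁.re = (1 / √(1 - s ^ 2)) * s * lam.re := by
    change (_ * _ * lam).re = _
    rw [← ofReal_mul, re_ofReal_mul]
  rw [hκ₁]
  exact ⟨by positivity,
    mul_mul_re_lt_re_of_sq_eq (Real.one_div_sqrt_sq_mul_self ht) hs0.ne' hlam.ne' hkre.le hkappa⟩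

/-- With γ = 1/√(1−v²), μ = m/γ, 0 < |v| < 1, m > 0, κ the branch of γ√(λ²+μ²)
with Re κ > 0, and κ₁ = γ|v|λ, one has 0 < Re κ₁ < Re κ for Re λ > 0. -/
theorem green_exponent_inequality (s : ℝ) (hs0 : 0 < s) (hs1 : s < 1) (m : ℝ) (hm : 0 < m)
    (lam : ℂ) (hlam : 0 < lam.re) (kappa : ℂ)
    (hkappa : kappa ^ 2 =
      ((1 / Real.sqrt (1 - s ^ 2) : ℝ) : ℂ) ^ 2 *
        (lam ^ 2 + ((m * Real.sqrt (1 - s ^ 2) : ℝ) : ℂ) ^ 2))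
    (hkre : 0 < kappa.re) :
    let kappa₁ : ℂ := ((1 / Real.sqrt (1 - s ^ 2) : ℝ) : ℂ) * (s : ℂ) * lam
    0 < kappa₁.re ∧ kappa₁.re < kappa.re :=
  green_exponent_inequality_general s hs0 hs1 m lam hlam kappa hkappa hkre
end

section
/- Let a, b, f: [0,∞) → [0,∞) with f(t) ≤ a/(1+t)^{3/2} + b ∫₀ᵗ (1+|t−s|)^{−3/2} [ f(s) ∫ₛ^{t₁} f(τ)² dτ + f(s)² ] ds for 0 ≤ t ≤ t₁, and let m(t) = sup_{0≤s≤t} (1+s)^{3/2} f(s). Then there exists a constant I̅ < ∞ (depending only on the kernel) such that m(t₁) ≤ C a + C I̅ (m(t₁)³ + m(t₁)²), where I(t₁) = sup_{t∈[0,t₁]} ∫₀ᵗ (1+t)^{3/2}(1+|t−s|)^{−3/2} [ (1+s)^{−3/2} ∫ₛ^{t₁}(1+τ)^{−3} dτ + (1+s)^{−3} ] ds is uniformly bounded in t₁. -/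
/-!
If `(1 + s)^{3/2} f(s) ≤ M` on `[0, t₁]`, both nonlinear terms are bounded by
`(M³ + M²) · (3/2) (1 + s)^{-3}`, and `(1 + s)^{-3/2} ∫ₛ^{t₁} (1 + τ)^{-3} dτ + (1 + s)^{-3}`
is bounded in the same way. Everything is thus reduced to the convolution estimate
`(1 + t)^a ∫₀ᵗ (1 + |t - s|)^{-a} (1 + s)^{-b} ds ≤ 2^{a-1} (1/(a-1) + 1/(b-1))` for `1 < a ≤ b`,
which follows pointwise from `(1 + t)^a ≤ 2^{a-1} ((1 + |t - s|)^a + (1 + s)^a)`.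
For `a = 3/2`, `b = 3` this gives `I̅ = 15/2`, and `C = 1 + b`.
-/

open MeasureTheory intervalIntegral Set

theorem intervalIntegral_mono_on_of_nonneg {f g : ℝ → ℝ} {a b : ℝ} (hab : a ≤ b)
    (hg : IntervalIntegrable g volume a b) (hf : ∀ x ∈ Icc a b, 0 ≤ f x)
    (hfg : ∀ x ∈ Icc a b, f x ≤ g x) : ∫ x in a..b, f x ≤ ∫ x in a..b, g x := by
  by_cases hfi : IntervalIntegrable f volume a b
  · exact integral_mono_on hab hfi hg hfg
  · rw [integral_undef hfi]
    exact integral_nonneg hab fun x hx => (hf x hx).trans (hfg x hx)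

theorem intervalIntegrable_one_add_rpow {p s u : ℝ} (hs : -1 < s) (hsu : s ≤ u) :
    IntervalIntegrable (fun τ : ℝ => (1 + τ) ^ p) volume s u :=
  ((by fun_prop : Continuous fun τ : ℝ => 1 + τ).continuousOn.rpow_const fun τ hτ =>
    Or.inl (by rw [uIcc_of_le hsu] at hτ; linarith [hτ.1])).intervalIntegrable

theorem continuous_one_add_abs_sub_rpow (t p : ℝ) :
    Continuous fun s : ℝ => (1 + |t - s|) ^ p :=
  (by fun_prop : Continuous fun s : ℝ => 1 + |t - s|).rpow_const fun _ => Or.inl (by positivity)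

theorem integral_one_add_rpow_neg_le {p s u : ℝ} (hp : 1 < p) (hs : -1 < s) (hsu : s ≤ u) :
    ∫ τ in s..u, (1 + τ) ^ (-p) ≤ (1 + s) ^ (1 - p) / (p - 1) := by
  have h0 : (0 : ℝ) ∉ uIcc (1 + s) (1 + u) := by
    rw [uIcc_of_le (by linarith)]
    exact fun h => by linarith [h.1]
  rw [integral_comp_add_left (fun x => x ^ (-p)) 1, integral_rpow (Or.inr ⟨by linarith, h0⟩),
    show -p + 1 = -(p - 1) by ring, div_neg, ← neg_div, neg_sub, show -(p - 1) = 1 - p by ring]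
  exact div_le_div_of_nonneg_right (sub_le_self _ (Real.rpow_nonneg (by linarith) _)) (by linarith)

theorem rpow_mul_rpow_neg_mul_rpow_neg_le {a b x y z : ℝ} (ha : 1 ≤ a) (hab : a ≤ b)
    (hx : 0 < x) (hy : 1 ≤ y) (hz : 0 ≤ z) (hzxy : z ≤ x + y) :
    z ^ a * (x ^ (-a) * y ^ (-b)) ≤ 2 ^ (a - 1) * (x ^ (-a) + y ^ (-b)) := by
  have hy0 : 0 < y := by linarith
  have hmean : z ^ a ≤ 2 ^ (a - 1) * (x ^ a + y ^ a) := by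
    calc z ^ a ≤ (x + y) ^ a := Real.rpow_le_rpow hz hzxy (by linarith)
      _ ≤ 2 ^ (a - 1) * (x ^ a + y ^ a) := by
        lift x to NNReal using hx.le
        lift y to NNReal using hy0.le
        exact_mod_cast NNReal.rpow_add_le_mul_rpow_add_rpow x y ha
  have hxa : x ^ a * x ^ (-a) = 1 := by rw [← Real.rpow_add hx]; simp
  have hyab : y ^ a * y ^ (-b) ≤ 1 := by
    rw [← Real.rpow_add hy0]
    exact Real.rpow_le_one_of_one_le_of_nonpos hy (by linarith)
  calc z ^ a * (x ^ (-a) * y ^ (-b))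
      ≤ 2 ^ (a - 1) * (x ^ a + y ^ a) * (x ^ (-a) * y ^ (-b)) := by gcongr
    _ = 2 ^ (a - 1) * (x ^ a * x ^ (-a) * y ^ (-b) + y ^ a * y ^ (-b) * x ^ (-a)) := by ring
    _ ≤ 2 ^ (a - 1) * (x ^ (-a) + y ^ (-b)) := by
      rw [hxa, one_mul, add_comm (y ^ (-b))]
      gcongr
      exact mul_le_of_le_one_left (by positivity) hyab

theorem one_add_rpow_mul_integral_le {a b t : ℝ} (ha : 1 < a) (hab : a ≤ b) (ht : 0 ≤ t) :
    (1 + t) ^ a * ∫ s in (0 : ℝ)..t, (1 + |t - s|) ^ (-a) * (1 + s) ^ (-b)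
      ≤ 2 ^ (a - 1) * (1 / (a - 1) + 1 / (b - 1)) := by
  have hK := continuous_one_add_abs_sub_rpow t (-a)
  have hw := intervalIntegrable_one_add_rpow (p := -b) (by norm_num : (-1 : ℝ) < 0) ht
  have hKint : ∫ s in (0 : ℝ)..t, (1 + |t - s|) ^ (-a) ≤ 1 / (a - 1) := by
    rw [integral_comp_sub_left (fun σ => (1 + |σ|) ^ (-a)) t, sub_self, sub_zero]
    calc ∫ σ in (0 : ℝ)..t, (1 + |σ|) ^ (-a) = ∫ σ in (0 : ℝ)..t, (1 + σ) ^ (-a) :=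
          integral_congr fun σ hσ => by
            rw [uIcc_of_le ht] at hσ
            simp only [abs_of_nonneg hσ.1]
      _ ≤ (1 + 0) ^ (1 - a) / (a - 1) := integral_one_add_rpow_neg_le ha (by norm_num) ht
      _ = 1 / (a - 1) := by norm_num
  have hwint : ∫ s in (0 : ℝ)..t, (1 + s) ^ (-b) ≤ 1 / (b - 1) := by
    simpa using integral_one_add_rpow_neg_le (by linarith) (by norm_num : (-1 : ℝ) < 0) ht
  rw [← intervalIntegral.integral_const_mul]
  calc ∫ s in (0 : ℝ)..t, (1 + t) ^ a * ((1 + |t - s|) ^ (-a) * (1 + s) ^ (-b))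
      ≤ ∫ s in (0 : ℝ)..t, 2 ^ (a - 1) * ((1 + |t - s|) ^ (-a) + (1 + s) ^ (-b)) := by
        refine integral_mono_on ht ?_ ?_ fun s hs => ?_
        · exact (hw.continuousOn_mul hK.continuousOn).const_mul _
        · exact ((hK.intervalIntegrable _ _).add hw).const_mul _
        · exact rpow_mul_rpow_neg_mul_rpow_neg_le ha.le hab (by positivity) (by linarith [hs.1])
            (by linarith) (by linarith [le_abs_self (t - s)])
    _ = 2 ^ (a - 1) * ((∫ s in (0 : ℝ)..t, (1 + |t - s|) ^ (-a)) +
          ∫ s in (0 : ℝ)..t, (1 + s) ^ (-b)) := by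
        rw [intervalIntegral.integral_const_mul, integral_add (hK.intervalIntegrable _ _) hw]
    _ ≤ 2 ^ (a - 1) * (1 / (a - 1) + 1 / (b - 1)) := by gcongr

theorem one_add_rpow_mul_integral_three_halves_le {t : ℝ} (ht : 0 ≤ t) :
    (1 + t) ^ ((3 : ℝ) / 2) *
      ∫ s in (0 : ℝ)..t, (1 + |t - s|) ^ (-(3 : ℝ) / 2) * (1 + s) ^ (-(3 : ℝ)) ≤ 5 := by
  have h := one_add_rpow_mul_integral_le (a := 3 / 2) (b := 3) (by norm_num) (by norm_num) ht
  have h2 : (2 : ℝ) ^ ((3 : ℝ) / 2 - 1) ≤ 2 := by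
    calc (2 : ℝ) ^ ((3 : ℝ) / 2 - 1) ≤ 2 ^ (1 : ℝ) :=
          Real.rpow_le_rpow_of_exponent_le (by norm_num) (by norm_num)
      _ = 2 := Real.rpow_one 2
  rw [neg_div]
  norm_num at h h2 ⊢
  linarith

theorem one_add_rpow_neg_three_halves_mul_self {s : ℝ} (hs : -1 < s) :
    (1 + s) ^ (-(3 : ℝ) / 2) * (1 + s) ^ (-(3 : ℝ) / 2) = (1 + s) ^ (-(3 : ℝ)) := by
  rw [← Real.rpow_add (by linarith)]
  norm_num

theorem integral_one_add_rpow_neg_three_le {s u : ℝ} (hs : 0 ≤ s) (hsu : s ≤ u) :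
    ∫ τ in s..u, (1 + τ) ^ (-(3 : ℝ)) ≤ (1 + s) ^ (-(3 : ℝ) / 2) / 2 := by
  calc ∫ τ in s..u, (1 + τ) ^ (-(3 : ℝ)) ≤ (1 + s) ^ (1 - (3 : ℝ)) / (3 - 1) :=
        integral_one_add_rpow_neg_le (p := 3) (by norm_num) (by linarith) hsu
    _ ≤ (1 + s) ^ (-(3 : ℝ) / 2) / 2 := by
        rw [show (1 : ℝ) - 3 = -2 by norm_num, show (3 : ℝ) - 1 = 2 by norm_num]
        exact div_le_div_of_nonneg_right
          (Real.rpow_le_rpow_of_exponent_le (by linarith) (by norm_num)) zero_le_two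

theorem decay_weight_le {s u : ℝ} (hs : 0 ≤ s) (hsu : s ≤ u) :
    (1 + s) ^ (-(3 : ℝ) / 2) * (∫ τ in s..u, (1 + τ) ^ (-(3 : ℝ))) + (1 + s) ^ (-(3 : ℝ))
      ≤ 3 / 2 * (1 + s) ^ (-(3 : ℝ)) := by
  have hρ : 0 ≤ (1 + s) ^ (-(3 : ℝ) / 2) := Real.rpow_nonneg (by linarith) _
  have := mul_le_mul_of_nonneg_left (integral_one_add_rpow_neg_three_le hs hsu) hρ
  rw [← one_add_rpow_neg_three_halves_mul_self (by linarith)] at *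
  linarith

theorem nonlinear_term_le {f : ℝ → ℝ} {M s u : ℝ} (hM : 0 ≤ M) (hf0 : ∀ τ ∈ Icc 0 u, 0 ≤ f τ)
    (hfM : ∀ τ ∈ Icc 0 u, f τ ≤ M * (1 + τ) ^ (-(3 : ℝ) / 2)) (hs : 0 ≤ s) (hsu : s ≤ u) :
    f s * (∫ τ in s..u, f τ ^ 2) + f s ^ 2 ≤ (M ^ 3 + M ^ 2) * (3 / 2 * (1 + s) ^ (-(3 : ℝ))) := by
  have hsq : ∀ τ ∈ Icc s u, f τ ^ 2 ≤ M ^ 2 * (1 + τ) ^ (-(3 : ℝ)) := fun τ hτ => by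
    have hτ' : τ ∈ Icc 0 u := ⟨hs.trans hτ.1, hτ.2⟩
    rw [← one_add_rpow_neg_three_halves_mul_self (by linarith [hτ'.1])]
    nlinarith [hfM τ hτ', hf0 τ hτ']
  have hint : ∫ τ in s..u, f τ ^ 2 ≤ M ^ 2 * ((1 + s) ^ (-(3 : ℝ) / 2) / 2) := by
    calc ∫ τ in s..u, f τ ^ 2 ≤ ∫ τ in s..u, M ^ 2 * (1 + τ) ^ (-(3 : ℝ)) :=
          intervalIntegral_mono_on_of_nonneg hsu
            ((intervalIntegrable_one_add_rpow (by linarith) hsu).const_mul _)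
            (fun τ _ => sq_nonneg _) hsq
      _ ≤ M ^ 2 * ((1 + s) ^ (-(3 : ℝ) / 2) / 2) := by
          rw [intervalIntegral.integral_const_mul]
          gcongr
          exact integral_one_add_rpow_neg_three_le hs hsu
  have hρ : 0 ≤ (1 + s) ^ (-(3 : ℝ) / 2) := Real.rpow_nonneg (by linarith) _
  have hfs := hfM s ⟨hs, hsu⟩
  rw [← one_add_rpow_neg_three_halves_mul_self (by linarith)]
  calc f s * (∫ τ in s..u, f τ ^ 2) + f s ^ 2
      ≤ M * (1 + s) ^ (-(3 : ℝ) / 2) * (M ^ 2 * ((1 + s) ^ (-(3 : ℝ) / 2) / 2)) +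
          (M * (1 + s) ^ (-(3 : ℝ) / 2)) ^ 2 := by
        have := hf0 s ⟨hs, hsu⟩
        gcongr
        exact integral_nonneg hsu fun τ _ => sq_nonneg _
    _ ≤ _ := by nlinarith [pow_nonneg hM 3, mul_nonneg hρ hρ]

theorem weighted_bound_of_integral_inequality {f : ℝ → ℝ} {a b M u t : ℝ} (hb : 0 ≤ b)
    (hM : 0 ≤ M) (hf0 : ∀ τ ∈ Icc 0 u, 0 ≤ f τ)
    (hfM : ∀ τ ∈ Icc 0 u, f τ ≤ M * (1 + τ) ^ (-(3 : ℝ) / 2))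
    (ht : 0 ≤ t) (htu : t ≤ u)
    (hft : f t ≤ a / (1 + t) ^ ((3 : ℝ) / 2) + b * ∫ s in (0 : ℝ)..t,
      (1 + |t - s|) ^ (-(3 : ℝ) / 2) * (f s * (∫ τ in s..u, f τ ^ 2) + f s ^ 2)) :
    (1 + t) ^ ((3 : ℝ) / 2) * f t ≤ a + b * (15 / 2 * (M ^ 3 + M ^ 2)) := by
  have hK := continuous_one_add_abs_sub_rpow t (-(3 : ℝ) / 2)
  have hconv : (∫ s in (0 : ℝ)..t,
      (1 + |t - s|) ^ (-(3 : ℝ) / 2) * (f s * (∫ τ in s..u, f τ ^ 2) + f s ^ 2))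
      ≤ (M ^ 3 + M ^ 2) * (3 / 2) *
        ∫ s in (0 : ℝ)..t, (1 + |t - s|) ^ (-(3 : ℝ) / 2) * (1 + s) ^ (-(3 : ℝ)) := by
    rw [← intervalIntegral.integral_const_mul]
    refine intervalIntegral_mono_on_of_nonneg ht
      (((intervalIntegrable_one_add_rpow (by norm_num) ht).continuousOn_mul
        hK.continuousOn).const_mul _) (fun s hs => ?_) (fun s hs => ?_)
    · have := hf0 s ⟨hs.1, hs.2.trans htu⟩
      have : 0 ≤ ∫ τ in s..u, f τ ^ 2 := integral_nonneg (hs.2.trans htu) fun τ _ => sq_nonneg _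
      positivity
    · have := nonlinear_term_le hM hf0 hfM hs.1 (hs.2.trans htu)
      have : 0 ≤ (1 + |t - s|) ^ (-(3 : ℝ) / 2) := by positivity
      nlinarith
  set J := ∫ s in (0 : ℝ)..t, (1 + |t - s|) ^ (-(3 : ℝ) / 2) * (1 + s) ^ (-(3 : ℝ))
  calc (1 + t) ^ ((3 : ℝ) / 2) * f t
      ≤ (1 + t) ^ ((3 : ℝ) / 2) *
          (a / (1 + t) ^ ((3 : ℝ) / 2) + b * ((M ^ 3 + M ^ 2) * (3 / 2) * J)) := by
        gcongr
        exact hft.trans (add_le_add le_rfl (mul_le_mul_of_nonneg_left hconv hb))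
    _ = a + b * ((M ^ 3 + M ^ 2) * (3 / 2) * ((1 + t) ^ ((3 : ℝ) / 2) * J)) := by
        field_simp
    _ ≤ a + b * ((M ^ 3 + M ^ 2) * (3 / 2) * 5) := by
        gcongr
        exact one_add_rpow_mul_integral_three_halves_le ht
    _ = a + b * (15 / 2 * (M ^ 3 + M ^ 2)) := by ring

theorem decay_integral_le {u t : ℝ} (ht : 0 ≤ t) (htu : t ≤ u) :
    ∫ s in (0 : ℝ)..t, (1 + t) ^ ((3 : ℝ) / 2) * (1 + |t - s|) ^ (-(3 : ℝ) / 2) *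
      ((1 + s) ^ (-(3 : ℝ) / 2) * (∫ τ in s..u, (1 + τ) ^ (-(3 : ℝ))) + (1 + s) ^ (-(3 : ℝ)))
      ≤ 15 / 2 := by
  have hK := continuous_one_add_abs_sub_rpow t (-(3 : ℝ) / 2)
  calc _ ≤ ∫ s in (0 : ℝ)..t, 3 / 2 * (1 + t) ^ ((3 : ℝ) / 2) *
        ((1 + |t - s|) ^ (-(3 : ℝ) / 2) * (1 + s) ^ (-(3 : ℝ))) := by
        refine intervalIntegral_mono_on_of_nonneg ht
          (((intervalIntegrable_one_add_rpow (by norm_num) ht).continuousOn_mul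
            hK.continuousOn).const_mul _) (fun s hs => ?_) (fun s hs => ?_)
        · have : 0 ≤ ∫ τ in s..u, (1 + τ) ^ (-(3 : ℝ)) := integral_nonneg (hs.2.trans htu)
            fun τ hτ => Real.rpow_nonneg (by linarith [hs.1, hτ.1]) _
          have := hs.1
          positivity
        · have := decay_weight_le hs.1 (hs.2.trans htu)
          have : 0 ≤ (1 + t) ^ ((3 : ℝ) / 2) * (1 + |t - s|) ^ (-(3 : ℝ) / 2) := by positivity
          nlinarith
    _ = 3 / 2 * ((1 + t) ^ ((3 : ℝ) / 2) *
          ∫ s in (0 : ℝ)..t, (1 + |t - s|) ^ (-(3 : ℝ) / 2) * (1 + s) ^ (-(3 : ℝ))) := by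
        rw [intervalIntegral.integral_const_mul, mul_assoc]
    _ ≤ 15 / 2 := by linarith [one_add_rpow_mul_integral_three_halves_le ht]
theorem le_mul_rpow_neg_of_rpow_mul_le {x y M p : ℝ} (hx : 0 < x) (h : x ^ p * y ≤ M) :
    y ≤ M * x ^ (-p) := by
  rw [Real.rpow_neg hx.le, ← div_eq_mul_inv, le_div_iff₀ (by positivity)]
  linarith

/-- Majorant integral inequality: if
f(t) ≤ a/(1+t)^{3/2} + b ∫₀ᵗ (1+|t−s|)^{−3/2}[f(s)∫ₛ^{t₁} f(τ)²dτ + f(s)²]ds on [0,t₁],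
then with m(t) = sup_{0≤s≤t}(1+s)^{3/2}f(s) there are constants C and I̅ (depending only
on b and the kernel) such that I(t₁) ≤ I̅ and m(t₁) ≤ C a + C I̅ (m(t₁)³ + m(t₁)²). -/
theorem majorant_inequality :
    ∀ b : ℝ, 0 ≤ b → ∃ C Ibar : ℝ, 0 ≤ C ∧ 0 ≤ Ibar ∧
      ∀ (a : ℝ) (f : ℝ → ℝ) (t₁ : ℝ), 0 ≤ a → 0 ≤ t₁ → (∀ t, 0 ≤ f t) →
        (∀ t, 0 ≤ t → t ≤ t₁ →
          f t ≤ a / (1 + t) ^ ((3 : ℝ)/2) +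
            b * ∫ s in (0 : ℝ)..t, (1 + |t - s|) ^ (-(3 : ℝ)/2) *
              (f s * (∫ τ in s..t₁, f τ ^ 2) + f s ^ 2)) →
        (let m : ℝ → ℝ := fun t =>
            sSup ((fun s => (1 + s) ^ ((3 : ℝ)/2) * f s) '' Set.Icc 0 t)
         let I : ℝ → ℝ := fun u =>
            sSup ((fun t => ∫ s in (0 : ℝ)..t,
              (1 + t) ^ ((3 : ℝ)/2) * (1 + |t - s|) ^ (-(3 : ℝ)/2) *
                ((1 + s) ^ (-(3 : ℝ)/2) * (∫ τ in s..u, (1 + τ) ^ (-(3 : ℝ))) +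
                  (1 + s) ^ (-(3 : ℝ)))) '' Set.Icc 0 u)
         I t₁ ≤ Ibar ∧ m t₁ ≤ C * a + C * Ibar * (m t₁ ^ 3 + m t₁ ^ 2)) := by
  intro b hb
  refine ⟨1 + b, 15 / 2, by linarith, by norm_num, fun a f t₁ ha ht₁ hf0 hyp => ⟨?_, ?_⟩⟩
  · refine Real.sSup_le ?_ (by norm_num)
    rintro _ ⟨t, ht, rfl⟩
    exact decay_integral_le ht.1 ht.2
  · dsimp only
    set S := (fun s => (1 + s) ^ ((3 : ℝ) / 2) * f s) '' Icc 0 t₁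
    have hM : 0 ≤ sSup S := Real.sSup_nonneg <| by
      rintro _ ⟨s, hs, rfl⟩
      have := hs.1
      exact mul_nonneg (by positivity) (hf0 s)
    by_cases hB : BddAbove S
    · have hfM : ∀ s ∈ Icc 0 t₁, f s ≤ sSup S * (1 + s) ^ (-(3 : ℝ) / 2) := fun s hs => by
        simpa only [neg_div] using
          le_mul_rpow_neg_of_rpow_mul_le (by linarith [hs.1]) (le_csSup hB ⟨s, hs, rfl⟩)
      refine csSup_le ((nonempty_Icc.2 ht₁).image _) ?_
      rintro _ ⟨t, ht, rfl⟩
      have := weighted_bound_of_integral_inequality hb hM (fun τ _ => hf0 τ) hfM ht.1 ht.2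
        (hyp t ht.1 ht.2)
      have : 0 ≤ sSup S ^ 3 + sSup S ^ 2 := by positivity
      nlinarith
    · rw [Real.sSup_of_not_bddAbove hB]
      positivity
end
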